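/- Let s, t be nonnegative integers, n a positive integer, and w ≥ 0. Then there exist nonnegative reals w_1, ..., w_s with w_1 + ... + w_s ≤ w such that β*_{w,n}(P_{(s,t)}) ≤ β*_{w',n−s}(P_{(0,t)}) · ∏_{i=1}^{s} w_i, where w' = w − ∑_{i=1}^{s} w_i. -/

import Mathlib

open Finset
open scoped Classical

/-- A (bounded, nonnegative) measure on the edges of the complete graph `K_n`,
given by a symmetric nonnegative weight function vanishing on the diagonal. -/
structure EdgeMeasure (n : ℕ) where
  w : Fin n → Fin n → ℝ
  symm : ∀ i j, w i j = w j i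
  diag : ∀ i, w i i = 0
  nonneg : ∀ i j, 0 ≤ w i j

/-- Total mass of an edge measure (each unordered edge counted once). -/
noncomputable def mass {n : ℕ} (μ : EdgeMeasure n) : ℝ :=
  (∑ i, ∑ j, μ.w i j) / 2

/-- Weighted degree `μ̄(v)` of a vertex. -/
noncomputable def mubar {n : ℕ} (μ : EdgeMeasure n) (v : Fin n) : ℝ :=
  ∑ u, μ.w v u

/-- The μ-weight of the path traced by a tuple of `m` vertices:
the product of the weights of its `m-1` consecutive edges. -/
noncomputable def pathWt {n m : ℕ} (μ : EdgeMeasure n) (x : Fin m → Fin n) : ℝ :=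
  ∏ i : Fin (m - 1),
    μ.w (x ⟨i.1, by have := i.2; omega⟩) (x ⟨i.1 + 1, by have := i.2; omega⟩)

/-- `β(μ; P_m)`: total μ-weight of the (unlabeled, non-induced) copies of the path
on `m` vertices in `K_n`; each unlabeled copy corresponds to exactly two injective
labeled tuples, whence the division by 2. -/
noncomputable def betaP {n : ℕ} (μ : EdgeMeasure n) (m : ℕ) : ℝ :=
  (∑ x ∈ univ.filter (fun x : Fin m → Fin n => Function.Injective x), pathWt μ x) / 2

/-- `β(P_m)`: the supremum of `β(μ; P_m)` over all `n` and all probability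
measures `μ` on the edges of `K_n`. -/
noncomputable def betaPathSup (m : ℕ) : ℝ :=
  sSup {r : ℝ | ∃ n : ℕ, ∃ μ : EdgeMeasure n, mass μ = 1 ∧ r = betaP μ m}

/-- `β*(μ; P_{(s,t)})` with the path of length `s` starting at vertex `vs` and the
path of length `t` starting at vertex `vt`: each copy of the disjoint union
`P_{s+1} ⊔ P_{t+1}` is recorded by a jointly injective pair of tuples. -/
noncomputable def betaStar {n : ℕ} (μ : EdgeMeasure n) (s t : ℕ) (vs vt : Fin n) : ℝ :=
  ∑ p ∈ univ.filter
      (fun p : (Fin (s + 1) → Fin n) × (Fin (t + 1) → Fin n) =>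
        Function.Injective (Sum.elim p.1 p.2) ∧ p.1 0 = vs ∧ p.2 0 = vt),
    pathWt μ p.1 * pathWt μ p.2

/-- `β*_{w,n}(P_{(s,t)})`: the supremum of `β*(μ; P_{(s,t)})` over all measures of
total mass `w` on the edges of `K_n`, the length-`s` path starting at vertex `n`
(index `n-1`) and the length-`t` path starting at vertex `1` (index `0`). -/
noncomputable def betaStarSupN (w : ℝ) (n s t : ℕ) : ℝ :=
  sSup {r : ℝ | ∃ μ : EdgeMeasure n, mass μ = w ∧
    ∃ h : 0 < n, r = betaStar μ s t ⟨n - 1, by omega⟩ ⟨0, h⟩}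

/-- `ρ(μ; m) = ∑_{x ∈ (n)_m} μ̄(x_1) (∏ μ(x_i,x_{i+1})) μ̄(x_m)`, the sum over
ordered tuples of `m` distinct vertices. -/
noncomputable def rho {n : ℕ} (μ : EdgeMeasure n) (m : ℕ) : ℝ :=
  if h : 0 < m then
    ∑ x ∈ univ.filter (fun x : Fin m → Fin n => Function.Injective x),
      mubar μ (x ⟨0, h⟩) * pathWt μ x * mubar μ (x ⟨m - 1, by omega⟩)
  else 0

/-- `ρ_n(m)`: supremum of `ρ(μ; m)` over probability measures on the edges of `K_n`. -/
noncomputable def rhoN (n m : ℕ) : ℝ :=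
  sSup {r : ℝ | ∃ μ : EdgeMeasure n, mass μ = 1 ∧ r = rho μ m}

/-- `ρ(m) = sup_n ρ_n(m)`. -/
noncomputable def rhoSup (m : ℕ) : ℝ :=
  sSup {r : ℝ | ∃ n : ℕ, r = rhoN n m}

/-- `μ` is the uniform probability measure on the edges of the cycle `C_m` on the
vertices `0, 1, …, m-1` of `K_n`: each cycle edge gets weight `1/m`. -/
def CycleUniform {n : ℕ} (μ : EdgeMeasure n) (m : ℕ) : Prop :=
  ∀ a b : Fin n, μ.w a b =
    (if a.1 < m ∧ b.1 < m ∧ b.1 = (a.1 + 1) % m then (1 : ℝ) / m else 0) +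
    (if a.1 < m ∧ b.1 < m ∧ a.1 = (b.1 + 1) % m then (1 : ℝ) / m else 0)

/-- `deg_P(v)`: the number of edges of the path traced by the tuple `p` that are
incident to the vertex `v`. -/
noncomputable def degTuple {n m : ℕ} (p : Fin m → Fin n) (v : Fin n) : ℕ :=
  ((univ : Finset (Fin (m - 1))).filter (fun i =>
      p ⟨i.1, by have := i.2; omega⟩ = v ∨ p ⟨i.1 + 1, by have := i.2; omega⟩ = v)).card

/-!
Deleting the start vertex `v` of the length-`s` path and summing over its neighbour gives
`β*(μ; P_{(s,t)}) ≤ μ̄(v) · β*_{w - μ̄(v), n-1}(P_{(s-1,t)})`, because the rest of each copy lives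
in `K_n - v`, which carries mass `w - μ̄(v)`. Rescaling measures shows that `β*_{y,m}(P_{(s-1,t)})`
is `y^(s-1+t)` times its value at `y = 1`, so the bound is `x (w - x)^(s-1+t) · C` with
`x = μ̄(v) ∈ [0, w]`, and by weighted AM-GM this is largest at `x = w / (s + t)`. Taking `w_1` to
be that value and iterating gives the claim.
-/

open Function
open scoped NNReal Pointwise

namespace EdgeMeasure

variable {m n : ℕ}

theorem ext {μ ν : EdgeMeasure n} (h : μ.w = ν.w) : μ = ν := by
  cases μ; cases ν; cases h; rfl

def comap (f : Fin m → Fin n) (μ : EdgeMeasure n) : EdgeMeasure m where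
  w i j := μ.w (f i) (f j)
  symm _ _ := μ.symm _ _
  diag _ := μ.diag _
  nonneg _ _ := μ.nonneg _ _

noncomputable instance : SMul ℝ≥0 (EdgeMeasure n) where
  smul c μ :=
    { w := fun i j => c * μ.w i j
      symm := fun i j => by rw [μ.symm]
      diag := fun i => by rw [μ.diag, mul_zero]
      nonneg := fun i j => mul_nonneg c.coe_nonneg (μ.nonneg i j) }

theorem smul_w (c : ℝ≥0) (μ : EdgeMeasure n) (i j : Fin n) : (c • μ).w i j = c * μ.w i j :=
  rfl

def complete (n : ℕ) : EdgeMeasure n where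
  w i j := if i = j then 0 else 1
  symm i j := by simp only [eq_comm]
  diag i := if_pos rfl
  nonneg i j := by split_ifs <;> norm_num

end EdgeMeasure

open EdgeMeasure

theorem mul_pow_le_add_mul_div_pow {a b : ℝ} (ha : 0 ≤ a) (hb : 0 ≤ b) (k : ℕ) :
    a * b ^ k ≤ ((a + k * b) / (k + 1)) ^ (k + 1) := by
  rcases hb.eq_or_lt with rfl | hb
  · rcases k.eq_zero_or_pos with rfl | hk
    · simp
    · rw [zero_pow hk.ne', mul_zero]; positivity
  set M := (a + k * b) / (k + 1)
  have hbern := one_add_mul_sub_le_pow (a := M / b)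
    (by linarith [div_nonneg (by positivity : 0 ≤ M) hb.le]) (k + 1)
  have hM : b ^ (k + 1) * (M / b) ^ (k + 1) = M ^ (k + 1) := by
    rw [← mul_pow, mul_div_cancel₀ _ hb.ne']
  calc a * b ^ k = b ^ (k + 1) * (1 + ((k + 1 : ℕ) : ℝ) * (M / b - 1)) := by
        simp only [M]; field_simp; push_cast; ring
    _ ≤ M ^ (k + 1) := hM ▸ mul_le_mul_of_nonneg_left hbern (by positivity)

theorem mul_sub_pow_le {x w : ℝ} (hx : 0 ≤ x) (hxw : x ≤ w) (k : ℕ) :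
    x * (w - x) ^ k ≤ w / (k + 1) * (w - w / (k + 1)) ^ k := by
  rcases k.eq_zero_or_pos with rfl | hk
  · simpa
  have hk' : (0 : ℝ) < k := by exact_mod_cast hk
  have h := mul_pow_le_add_mul_div_pow (mul_nonneg hk'.le hx) (sub_nonneg.2 hxw) k
  have hrhs : ((k * x + k * (w - x)) / (k + 1)) ^ (k + 1) =
      k * (w / (k + 1) * (w - w / (k + 1)) ^ k) := by
    rw [pow_succ]; field_simp; ring
  rw [hrhs, mul_assoc] at h
  exact le_of_mul_le_mul_left h hk'

theorem Equiv.Perm.exists_apply_eq_and_apply_eq {α : Type*} [DecidableEq α] {a a' b b' : α}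
    (ha : a ≠ a') (hb : b ≠ b') : ∃ σ : Equiv.Perm α, σ a = b ∧ σ a' = b' := by
  set τ := Equiv.swap a' b'
  have hτ : τ a ≠ b' := fun h => ha (τ.injective (h.trans (Equiv.swap_apply_left a' b').symm))
  refine ⟨Equiv.swap (τ a) b * τ, Equiv.swap_apply_left _ _, ?_⟩
  rw [Equiv.Perm.mul_apply, Equiv.swap_apply_left, Equiv.swap_apply_of_ne_of_ne hτ.symm hb.symm]

section

variable {m n : ℕ}

theorem mubar_nonneg (μ : EdgeMeasure n) (v : Fin n) : 0 ≤ mubar μ v :=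
  sum_nonneg fun _ _ => μ.nonneg _ _

theorem mass_nonneg (μ : EdgeMeasure n) : 0 ≤ mass μ :=
  div_nonneg (sum_nonneg fun _ _ => mubar_nonneg μ _) zero_le_two

theorem mubar_le_mass (μ : EdgeMeasure n) (v : Fin n) : mubar μ v ≤ mass μ := by
  have hrest : mubar μ v ≤ ∑ u ∈ univ.erase v, mubar μ u :=
    calc mubar μ v = ∑ u ∈ univ.erase v, μ.w v u := by
          rw [mubar, ← add_sum_erase _ _ (mem_univ v), μ.diag, zero_add]
      _ ≤ ∑ u ∈ univ.erase v, mubar μ u := sum_le_sum fun u _ =>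
          μ.symm u v ▸ single_le_sum (f := μ.w u) (fun _ _ => μ.nonneg _ _) (mem_univ v)
  change mubar μ v ≤ (∑ u, mubar μ u) / 2
  linarith [add_sum_erase univ (mubar μ) (mem_univ v)]

theorem weight_le_mass (μ : EdgeMeasure n) (i j : Fin n) : μ.w i j ≤ mass μ :=
  (single_le_sum (f := μ.w i) (fun _ _ => μ.nonneg _ _) (mem_univ j)).trans (mubar_le_mass μ i)

theorem pathWt_nonneg (μ : EdgeMeasure n) (x : Fin m → Fin n) : 0 ≤ pathWt μ x :=
  prod_nonneg fun _ _ => μ.nonneg _ _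

theorem pathWt_le (μ : EdgeMeasure n) (x : Fin m → Fin n) :
    pathWt μ x ≤ mass μ ^ (m - 1) :=
  (prod_le_prod (fun _ _ => μ.nonneg _ _) fun _ _ => weight_le_mass μ _ _).trans_eq (by simp)

theorem betaStar_nonneg (μ : EdgeMeasure n) (s t : ℕ) (vs vt : Fin n) :
    0 ≤ betaStar μ s t vs vt :=
  sum_nonneg fun _ _ => mul_nonneg (pathWt_nonneg _ _) (pathWt_nonneg _ _)

theorem betaStar_le (μ : EdgeMeasure n) (s t : ℕ) (vs vt : Fin n) :
    betaStar μ s t vs vt ≤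
      Fintype.card ((Fin (s + 1) → Fin n) × (Fin (t + 1) → Fin n)) * mass μ ^ (s + t) := by
  have hM := mass_nonneg μ
  calc betaStar μ s t vs vt ≤ ∑ _p : (Fin (s + 1) → Fin n) × (Fin (t + 1) → Fin n),
        mass μ ^ s * mass μ ^ t := by
        refine sum_le_sum_of_subset_of_nonneg (filter_subset _ _) (fun _ _ _ => by positivity)
          |>.trans' (sum_le_sum fun p _ => ?_)
        simpa using mul_le_mul (pathWt_le μ p.1) (pathWt_le μ p.2) (pathWt_nonneg _ _)
          (by positivity)
    _ = _ := by rw [sum_const, nsmul_eq_mul, card_univ, pow_add]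

theorem betaStar_eq_zero_of_lt (μ : EdgeMeasure n) {s t : ℕ} (h : n < s + t + 2) (vs vt : Fin n) :
    betaStar μ s t vs vt = 0 := by
  refine sum_eq_zero fun p hp => absurd (Fintype.card_le_of_injective _ (mem_filter.1 hp).2.1) ?_
  simp only [Fintype.card_sum, Fintype.card_fin]
  omega

theorem betaStar_self (μ : EdgeMeasure n) (s t : ℕ) (v : Fin n) : betaStar μ s t v v = 0 := by
  refine sum_eq_zero fun p hp => ?_
  obtain ⟨hinj, h1, h2⟩ := (mem_filter.1 hp).2
  exact absurd (hinj (a₁ := .inl 0) (a₂ := .inr 0) (h1.trans h2.symm)) Sum.inl_ne_inr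

theorem mass_smul (c : ℝ≥0) (μ : EdgeMeasure n) : mass (c • μ) = c * mass μ := by
  simp only [mass, smul_w, ← mul_sum, mul_div_assoc]

theorem pathWt_smul (c : ℝ≥0) (μ : EdgeMeasure n) (x : Fin m → Fin n) :
    pathWt (c • μ) x = (c : ℝ) ^ (m - 1) * pathWt μ x := by
  simp [pathWt, smul_w, prod_mul_distrib]

theorem betaStar_smul (c : ℝ≥0) (μ : EdgeMeasure n) (s t : ℕ) (vs vt : Fin n) :
    betaStar (c • μ) s t vs vt = (c : ℝ) ^ (s + t) * betaStar μ s t vs vt := by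
  simp only [betaStar, mul_sum, pathWt_smul, Nat.add_sub_cancel, pow_add]
  exact sum_congr rfl fun _ _ => by ring

theorem exists_mass_eq_one (hn : 2 ≤ n) : ∃ μ : EdgeMeasure n, mass μ = 1 := by
  have h01 : (complete n).w ⟨0, by omega⟩ ⟨1, hn⟩ = 1 := by simp [complete]
  have hpos : 0 < mass (complete n) :=
    one_pos.trans_le (h01 ▸ weight_le_mass (complete n) _ _)
  exact ⟨(mass (complete n)).toNNReal⁻¹ • complete n, by
    rw [mass_smul, NNReal.coe_inv, Real.coe_toNNReal _ hpos.le, inv_mul_cancel₀ hpos.ne']⟩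

theorem exists_eq_smul_of_mass_eq (hn : 2 ≤ n) {μ : EdgeMeasure n} {y : ℝ≥0} (hμ : mass μ = y) :
    ∃ ν : EdgeMeasure n, mass ν = 1 ∧ μ = y • ν := by
  rcases eq_or_ne y 0 with rfl | hy
  · obtain ⟨ν, hν⟩ := exists_mass_eq_one hn
    refine ⟨ν, hν, ext <| funext₂ fun i j => ?_⟩
    rw [smul_w, NNReal.coe_zero, zero_mul]
    exact le_antisymm ((weight_le_mass μ i j).trans_eq (by simp [hμ])) (μ.nonneg i j)
  · refine ⟨y⁻¹ • μ, ?_, ext <| funext₂ fun i j => ?_⟩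
    · rw [mass_smul, hμ, NNReal.coe_inv, inv_mul_cancel₀ (NNReal.coe_ne_zero.2 hy)]
    · rw [smul_w, smul_w, ← mul_assoc, ← NNReal.coe_mul, mul_inv_cancel₀ hy, NNReal.coe_one,
        one_mul]

theorem betaStarSupN_nonneg (w : ℝ) (n s t : ℕ) : 0 ≤ betaStarSupN w n s t :=
  Real.sSup_nonneg <| by
    rintro r ⟨μ, -, -, rfl⟩
    exact betaStar_nonneg _ _ _ _ _

theorem betaStarSupN_eq_zero_of_lt (w : ℝ) {n s t : ℕ} (h : n < s + t + 2) :
    betaStarSupN w n s t = 0 :=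
  le_antisymm (Real.sSup_nonpos <| by
    rintro r ⟨μ, -, -, rfl⟩
    exact (betaStar_eq_zero_of_lt μ h _ _).le) (betaStarSupN_nonneg _ _ _ _)

theorem betaStarSupN_eq_pow_mul {y : ℝ} (hy : 0 ≤ y) (n s t : ℕ) :
    betaStarSupN y n s t = y ^ (s + t) * betaStarSupN 1 n s t := by
  rcases lt_or_ge n (s + t + 2) with h | h
  · rw [betaStarSupN_eq_zero_of_lt _ h, betaStarSupN_eq_zero_of_lt _ h, mul_zero]
  lift y to ℝ≥0 using hy
  have hsets : {r : ℝ | ∃ μ : EdgeMeasure n, mass μ = y ∧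
        ∃ h : 0 < n, r = betaStar μ s t ⟨n - 1, by omega⟩ ⟨0, h⟩} =
      ((y : ℝ) ^ (s + t)) • {r : ℝ | ∃ μ : EdgeMeasure n, mass μ = 1 ∧
        ∃ h : 0 < n, r = betaStar μ s t ⟨n - 1, by omega⟩ ⟨0, h⟩} := by
    ext r
    simp only [Set.mem_smul_set, Set.mem_ofPred_eq, smul_eq_mul]
    constructor
    · rintro ⟨μ, hμ, hn, rfl⟩
      obtain ⟨ν, hν, rfl⟩ := exists_eq_smul_of_mass_eq (by omega) hμ
      exact ⟨_, ⟨ν, hν, hn, rfl⟩, (betaStar_smul _ _ _ _ _ _).symm⟩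
    · rintro ⟨_, ⟨ν, hν, hn, rfl⟩, rfl⟩
      exact ⟨y • ν, by rw [mass_smul, hν, mul_one], hn, (betaStar_smul _ _ _ _ _ _).symm⟩
  rw [betaStarSupN, hsets, Real.sSup_smul_of_nonneg (by positivity)]
  rfl

noncomputable def betaStarOn (μ : EdgeMeasure n) (S : Set (Fin n)) (s t : ℕ) (vs vt : Fin n) : ℝ :=
  ∑ p ∈ univ.filter
      (fun p : (Fin (s + 1) → Fin n) × (Fin (t + 1) → Fin n) =>
        Injective (Sum.elim p.1 p.2) ∧ p.1 0 = vs ∧ p.2 0 = vt ∧ Set.range (Sum.elim p.1 p.2) ⊆ S),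
    pathWt μ p.1 * pathWt μ p.2

theorem betaStarOn_univ (μ : EdgeMeasure n) (s t : ℕ) (vs vt : Fin n) :
    betaStarOn μ Set.univ s t vs vt = betaStar μ s t vs vt := by
  simp only [betaStarOn, betaStar, Set.subset_univ, and_true]

theorem betaStarOn_eq_zero_of_not_mem (μ : EdgeMeasure n) {S : Set (Fin n)} (s t : ℕ)
    {vs vt : Fin n} (h : vs ∉ S ∨ vt ∉ S) : betaStarOn μ S s t vs vt = 0 := by
  refine sum_eq_zero fun p hp => ?_
  obtain ⟨-, rfl, rfl, hS⟩ := (mem_filter.1 hp).2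
  exact (h.elim (· (hS ⟨.inl 0, rfl⟩)) (· (hS ⟨.inr 0, rfl⟩))).elim

theorem betaStar_comap {f : Fin m → Fin n} (hf : Injective f) (μ : EdgeMeasure n) (s t : ℕ)
    (b c : Fin m) : betaStar (μ.comap f) s t b c = betaStarOn μ (Set.range f) s t (f b) (f c) := by
  refine sum_nbij (fun p => (f ∘ p.1, f ∘ p.2)) (fun p hp => ?_) (fun p _ q _ hpq => ?_)
    (fun q hq => ?_) (fun _ _ => rfl)
  · obtain ⟨hinj, h1, h2⟩ := (mem_filter.1 hp).2
    refine mem_filter.2 ⟨mem_univ _, ?_, congrArg f h1, congrArg f h2, ?_⟩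
    · rw [← Sum.comp_elim]; exact hf.comp hinj
    · rw [← Sum.comp_elim]; exact Set.range_comp_subset_range _ _
  · simp only [Prod.mk.injEq] at hpq
    exact Prod.ext (hf.comp_left hpq.1) (hf.comp_left hpq.2)
  · obtain ⟨hinj, h1, h2, hS⟩ := (mem_filter.1 (mem_coe.1 hq)).2
    obtain ⟨g, hg⟩ := Set.range_subset_range_iff_exists_comp.1 hS
    have hg' : Injective g := Injective.of_comp (f := f) (hg ▸ hinj)
    refine ⟨(g ∘ Sum.inl, g ∘ Sum.inr), mem_filter.2 ⟨mem_univ _, ?_, ?_, ?_⟩, ?_⟩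
    · rwa [Sum.elim_comp_inl_inr]
    · exact hf (by simpa [← h1] using (congrFun hg (.inl 0)).symm)
    · exact hf (by simpa [← h2] using (congrFun hg (.inr 0)).symm)
    · simp only [← Function.comp_assoc, ← hg, Sum.elim_comp_inl, Sum.elim_comp_inr]

theorem mass_comap_perm (σ : Equiv.Perm (Fin n)) (μ : EdgeMeasure n) :
    mass (μ.comap σ) = mass μ := by
  simp only [mass, comap]
  rw [Equiv.sum_comp σ (fun i => ∑ j, μ.w i (σ j))]
  simp only [Equiv.sum_comp σ (μ.w _)]

theorem betaStar_comap_perm (σ : Equiv.Perm (Fin n)) (μ : EdgeMeasure n) (s t : ℕ)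
    (b c : Fin n) : betaStar (μ.comap σ) s t b c = betaStar μ s t (σ b) (σ c) := by
  rw [betaStar_comap σ.injective, σ.range_eq_univ, betaStarOn_univ]

theorem range_castSucc_eq_compl : Set.range (Fin.castSucc : Fin n → Fin (n + 1)) = {Fin.last n}ᶜ :=
  Set.ext fun _ => Fin.exists_castSucc_eq

theorem mass_comap_castSucc (μ : EdgeMeasure (n + 1)) :
    mass (μ.comap Fin.castSucc) = mass μ - mubar μ (Fin.last n) := by
  have hcol : ∑ i : Fin n, μ.w i.castSucc (Fin.last n) = mubar μ (Fin.last n) := by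
    rw [mubar, Fin.sum_univ_castSucc, μ.diag, add_zero]
    exact sum_congr rfl fun i _ => μ.symm _ _
  have hrow : ∀ i : Fin n, mubar μ i.castSucc =
      ∑ j : Fin n, μ.w i.castSucc j.castSucc + μ.w i.castSucc (Fin.last n) :=
    fun i => Fin.sum_univ_castSucc _
  have htot : ∑ i, mubar μ i =
      ∑ i : Fin n, ∑ j : Fin n, μ.w i.castSucc j.castSucc + 2 * mubar μ (Fin.last n) := by
    rw [Fin.sum_univ_castSucc, sum_congr rfl fun i _ => hrow i, sum_add_distrib, hcol]
    ring
  change (∑ i : Fin n, ∑ j : Fin n, μ.w i.castSucc j.castSucc) / 2 =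
    (∑ i, mubar μ i) / 2 - mubar μ (Fin.last n)
  rw [htot]
  ring

theorem pathWt_cons {k : ℕ} (μ : EdgeMeasure n) (v : Fin n) (x : Fin (k + 1) → Fin n) :
    pathWt μ (Fin.cons v x : Fin (k + 2) → Fin n) = μ.w v (x 0) * pathWt μ x :=
  Fin.prod_univ_succ _

theorem injective_sumElim_cons_iff {s t : ℕ} (v : Fin n) (x : Fin (s + 1) → Fin n)
    (y : Fin (t + 1) → Fin n) :
    Injective (Sum.elim (Fin.cons v x : Fin (s + 2) → Fin n) y) ↔
      Injective (Sum.elim x y) ∧ Set.range (Sum.elim x y) ⊆ {v}ᶜ := by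
  simp only [Sum.elim_injective, Fin.cons_injective_iff, Fin.forall_fin_succ (n := s + 1),
    Fin.cons_zero, Fin.cons_succ, Set.range_subset_iff, Sum.forall, Sum.elim_inl, Sum.elim_inr,
    Set.mem_compl_singleton_iff, Set.mem_range, not_exists]
  grind

theorem betaStar_succ_eq (μ : EdgeMeasure n) (s t : ℕ) (v a : Fin n) :
    betaStar μ (s + 1) t v a = ∑ u, μ.w v u * betaStarOn μ {v}ᶜ s t u a := by
  set G := univ.filter (fun q : (Fin (s + 1) → Fin n) × (Fin (t + 1) → Fin n) =>
    Injective (Sum.elim q.1 q.2) ∧ q.2 0 = a ∧ Set.range (Sum.elim q.1 q.2) ⊆ {v}ᶜ)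
  have hcons : betaStar μ (s + 1) t v a =
      ∑ q ∈ G, μ.w v (q.1 0) * (pathWt μ q.1 * pathWt μ q.2) := by
    refine sum_nbij' (fun p => (Fin.tail p.1, p.2)) (fun q => (Fin.cons v q.1, q.2))
      (fun p hp => ?_) (fun q hq => ?_) (fun p hp => ?_) (fun q _ => rfl) (fun p hp => ?_)
    · simp only [mem_filter, mem_univ, true_and, G] at hp ⊢
      obtain ⟨hinj, hv, ha⟩ := hp
      rw [← Fin.cons_self_tail p.1, hv, injective_sumElim_cons_iff] at hinj
      exact ⟨hinj.1, ha, hinj.2⟩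
    · simp only [mem_filter, mem_univ, true_and, G] at hq ⊢
      exact ⟨(injective_sumElim_cons_iff _ _ _).2 ⟨hq.1, hq.2.2⟩, rfl, hq.2.1⟩
    · simp only [mem_filter, mem_univ, true_and] at hp
      rw [← hp.2.1, Fin.cons_self_tail]
    · simp only [mem_filter, mem_univ, true_and] at hp
      conv_lhs => rw [← Fin.cons_self_tail p.1, hp.2.1, pathWt_cons]
      rw [mul_assoc]
  rw [hcons, ← sum_fiberwise G (fun q => q.1 0)]
  refine sum_congr rfl fun u _ => ?_
  rw [betaStarOn, mul_sum, filter_filter]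
  refine sum_congr (filter_congr fun q _ => ?_) fun q hq => ?_
  · tauto
  · rw [(mem_filter.1 hq).2.2.1]

theorem betaStar_le_betaStarSupN (ν : EdgeMeasure m) (s t : ℕ) (b c : Fin m) :
    betaStar ν s t b c ≤ betaStarSupN (mass ν) m s t := by
  rcases eq_or_ne b c with rfl | hbc
  · rw [betaStar_self]
    exact betaStarSupN_nonneg _ _ _ _
  have hm : 2 ≤ m := by
    by_contra h
    exact hbc (Fin.ext (by omega))
  obtain ⟨σ, rfl, rfl⟩ := Equiv.Perm.exists_apply_eq_and_apply_eq
    (a := (⟨m - 1, by omega⟩ : Fin m)) (a' := ⟨0, by omega⟩) (by simp [Fin.ext_iff]; omega) hbc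
  rw [← betaStar_comap_perm, ← mass_comap_perm σ]
  refine le_csSup ⟨Fintype.card ((Fin (s + 1) → Fin m) × (Fin (t + 1) → Fin m)) *
    mass (ν.comap σ) ^ (s + t), ?_⟩ ⟨ν.comap σ, rfl, by omega, rfl⟩
  rintro r ⟨μ, hμ, -, rfl⟩
  exact (betaStar_le μ s t _ _).trans_eq (by rw [hμ])

theorem betaStarOn_compl_last_le (μ : EdgeMeasure (n + 1)) (s t : ℕ) (u a : Fin (n + 1)) :
    betaStarOn μ {Fin.last n}ᶜ s t u a ≤ betaStarSupN (mass μ - mubar μ (Fin.last n)) n s t := by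
  cases u using Fin.lastCases with
  | last =>
    rw [betaStarOn_eq_zero_of_not_mem _ _ _ (.inl (by simp))]
    exact betaStarSupN_nonneg _ _ _ _
  | cast u =>
    cases a using Fin.lastCases with
    | last =>
      rw [betaStarOn_eq_zero_of_not_mem _ _ _ (.inr (by simp))]
      exact betaStarSupN_nonneg _ _ _ _
    | cast a =>
      rw [← range_castSucc_eq_compl, ← betaStar_comap (Fin.castSucc_injective n),
        ← mass_comap_castSucc]
      exact betaStar_le_betaStarSupN _ _ _ _ _

theorem betaStar_succ_le (μ : EdgeMeasure (n + 1)) (s t : ℕ) (a : Fin (n + 1)) :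
    betaStar μ (s + 1) t (Fin.last n) a ≤
      mubar μ (Fin.last n) * betaStarSupN (mass μ - mubar μ (Fin.last n)) n s t := by
  rw [betaStar_succ_eq, mubar, sum_mul]
  exact sum_le_sum fun u _ =>
    mul_le_mul_of_nonneg_left (betaStarOn_compl_last_le μ s t u a) (μ.nonneg _ _)

theorem betaStarSupN_succ_le {w : ℝ} (hw : 0 ≤ w) (n s t : ℕ) :
    betaStarSupN w n (s + 1) t ≤
      w / (s + t + 1) * betaStarSupN (w - w / (s + t + 1)) (n - 1) s t := by
  have hx₀ : 0 ≤ w / (s + t + 1) := by positivity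
  have hx₀w : w / (s + t + 1) ≤ w := div_le_self hw (by linarith)
  refine Real.sSup_le ?_ (mul_nonneg hx₀ (betaStarSupN_nonneg _ _ _ _))
  rintro r ⟨μ, rfl, hn, rfl⟩
  obtain ⟨n, rfl⟩ : ∃ k, n = k + 1 := ⟨n - 1, by omega⟩
  set K := betaStarSupN 1 n s t
  have hK : 0 ≤ K := betaStarSupN_nonneg _ _ _ _
  have hx := mubar_le_mass μ (Fin.last n)
  calc betaStar μ (s + 1) t (Fin.last n) ⟨0, hn⟩
      ≤ mubar μ (Fin.last n) * betaStarSupN (mass μ - mubar μ (Fin.last n)) n s t :=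
        betaStar_succ_le μ s t _
    _ = mubar μ (Fin.last n) * (mass μ - mubar μ (Fin.last n)) ^ (s + t) * K := by
        rw [betaStarSupN_eq_pow_mul (sub_nonneg.2 hx), mul_assoc]
    _ ≤ mass μ / (s + t + 1) * (mass μ - mass μ / (s + t + 1)) ^ (s + t) * K := by
        have h := mul_sub_pow_le (mubar_nonneg μ _) hx (s + t)
        push_cast at h
        exact mul_le_mul_of_nonneg_right h hK
    _ = _ := by
        rw [betaStarSupN_eq_pow_mul (sub_nonneg.2 hx₀w), mul_assoc]
        rfl

end

theorem stmt7_general (s t n : ℕ) (w : ℝ) (hw : 0 ≤ w) :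
    ∃ ws : Fin s → ℝ, (∀ i, 0 ≤ ws i) ∧ (∑ i, ws i) ≤ w ∧
      betaStarSupN w n s t ≤
        betaStarSupN (w - ∑ i, ws i) (n - s) 0 t * ∏ i, ws i := by
  induction s generalizing n w with
  | zero => exact ⟨Fin.elim0, fun i => i.elim0, by simpa using hw, by simp⟩
  | succ s ih =>
    set x₀ := w / (s + t + 1)
    have hx₀ : 0 ≤ x₀ := by positivity
    have hx₀w : x₀ ≤ w := div_le_self hw (by linarith)
    obtain ⟨ws, hws, hsum, hle⟩ := ih (n - 1) (w - x₀) (sub_nonneg.2 hx₀w)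
    refine ⟨Fin.cons x₀ ws, Fin.cases hx₀ hws, by rw [Fin.sum_cons]; linarith, ?_⟩
    calc betaStarSupN w n (s + 1) t ≤ x₀ * betaStarSupN (w - x₀) (n - 1) s t :=
          betaStarSupN_succ_le hw n s t
      _ ≤ x₀ * (betaStarSupN (w - x₀ - ∑ i, ws i) (n - 1 - s) 0 t * ∏ i, ws i) := by gcongr
      _ = _ := by
        rw [Fin.sum_cons, Fin.prod_cons, sub_sub, Nat.sub_sub, Nat.add_comm 1 s]
        ring

/-- Claim 2.6: there are nonnegative `w_1, …, w_s` with `∑ w_i ≤ w` such that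
`β*_{w,n}(P_{(s,t)}) ≤ β*_{w',n-s}(P_{(0,t)}) · ∏ w_i` where `w' = w - ∑ w_i`. -/
theorem stmt7 (s t n : ℕ) (hn : 0 < n) (w : ℝ) (hw : 0 ≤ w) :
    ∃ ws : Fin s → ℝ, (∀ i, 0 ≤ ws i) ∧ (∑ i, ws i) ≤ w ∧
      betaStarSupN w n s t ≤
        betaStarSupN (w - ∑ i, ws i) (n - s) 0 t * ∏ i, ws i :=
  stmt7_general s t n w hw
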